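/- A lottery p is SD-efficient at a profile R if and only if there is no lottery q and no utility representation such that q u-dominates p for every utility representation u of R; equivalently, an SDS f never returns a lottery that is u-dominated for all utility representations u if and only if for every profile R there is no lottery q with q ≿_i^SD f(R) for all agents i and q ≻_i^SD f(R) for some agent i. -/

import Mathlib

open Classical

noncomputable section

variable {A : Type*} [Fintype A]

/-- A (weak) preference relation: complete and transitive. -/
def IsPref (r : A → A → Prop) : Prop :=
  (∀ x y, r x y ∨ r y x) ∧ ∀ x y z, r x y → r y z → r x z

/-- A lottery over the alternatives. -/
def Lottery (A : Type*) [Fintype A] :=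
  {p : A → ℝ // (∀ x, 0 ≤ p x) ∧ ∑ x, p x = 1}

/-- Probability that lottery `p` yields an alternative at least as good as `x` w.r.t. `r`. -/
def upperSum (r : A → A → Prop) (p : Lottery A) (x : A) : ℝ :=
  ∑ y, if r y x then p.1 y else 0

/-- `p` (weakly) stochastically dominates `q` w.r.t. the preference relation `r`. -/
def SDGe (r : A → A → Prop) (p q : Lottery A) : Prop :=
  ∀ x, upperSum r q x ≤ upperSum r p x

/-- Strict stochastic dominance. -/
def SDGt (r : A → A → Prop) (p q : Lottery A) : Prop :=
  SDGe r p q ∧ ¬ SDGe r q p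

/-- A profile assigning a preference relation to each of `n` agents; validity. -/
def ValidProfile {n : ℕ} (R : Fin n → A → A → Prop) : Prop :=
  ∀ i, IsPref (R i)

/-- `p` is SD-efficient at profile `R`. -/
def SDEfficientAt {n : ℕ} (R : Fin n → A → A → Prop) (p : Lottery A) : Prop :=
  ¬ ∃ q : Lottery A, (∀ i, SDGe (R i) q p) ∧ ∃ i, SDGt (R i) q p

def Anonymous {n : ℕ} (f : (Fin n → A → A → Prop) → Lottery A) : Prop :=
  ∀ R : Fin n → A → A → Prop, ValidProfile R →
    ∀ σ : Equiv.Perm (Fin n), f (R ∘ σ) = f R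

/-- Relabel a preference relation by a permutation of the alternatives. -/
def relabel (π : Equiv.Perm A) (r : A → A → Prop) : A → A → Prop :=
  fun x y => r (π.symm x) (π.symm y)

def relabelProfile {n : ℕ} (π : Equiv.Perm A) (R : Fin n → A → A → Prop) :
    Fin n → A → A → Prop :=
  fun i => relabel π (R i)

def Neutral {n : ℕ} (f : (Fin n → A → A → Prop) → Lottery A) : Prop :=
  ∀ R : Fin n → A → A → Prop, ValidProfile R →
    ∀ (π : Equiv.Perm A) (x : A), (f (relabelProfile π R)).1 (π x) = (f R).1 x

def Efficient {n : ℕ} (f : (Fin n → A → A → Prop) → Lottery A) : Prop :=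
  ∀ R : Fin n → A → A → Prop, ValidProfile R → SDEfficientAt R (f R)

def Strategyproof {n : ℕ} (f : (Fin n → A → A → Prop) → Lottery A) : Prop :=
  ¬ ∃ (R : Fin n → A → A → Prop) (i : Fin n) (r : A → A → Prop),
      ValidProfile R ∧ IsPref r ∧ SDGt (R i) (f (Function.update R i r)) (f R)


/-- A utility function `u` is consistent with the preference relation `r`. -/
def ConsistentUtil {A : Type*} (r : A → A → Prop) (u : A → ℝ) : Prop :=
  ∀ x y, u x ≥ u y ↔ r x y

/-- Expected utility of a lottery. -/
noncomputable def expUtil {A : Type*} [Fintype A] (u : A → ℝ) (p : Lottery A) : ℝ :=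
  ∑ x, p.1 x * u x

/-- A utility representation of a profile. -/
def UtilRep {A : Type*} {n : ℕ} (R : Fin n → A → A → Prop) (u : Fin n → A → ℝ) : Prop :=
  ∀ i, ConsistentUtil (R i) (u i)

/-- `q` u-dominates `p`. -/
def UDom {A : Type*} [Fintype A] {n : ℕ} (u : Fin n → A → ℝ) (q p : Lottery A) : Prop :=
  (∀ i, expUtil (u i) p ≤ expUtil (u i) q) ∧ ∃ i, expUtil (u i) p < expUtil (u i) q

/-!
Fix a utility `u` consistent with `r` and put `d = q - p`, so `∑ d = 0`. Grouping the
alternatives by their utility value and summing by parts over the increasing values of `u`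
expresses `E_u q - E_u p = ∑ d x * u x` as a nonnegative combination of the masses `d` puts
on the upper sets of `r`; hence SD-dominance forces `E_u p ≤ E_u q` for every such `u`, strictly
when one upper-set mass is positive. Conversely, if `q` puts less mass than `p` on the upper set
`U` of some `x₀`, adding a large multiple of the indicator of `U` to any consistent utility keeps
it consistent and makes `p` strictly better than `q`.
-/

theorem filter_le_insert_of_forall_lt {α : Type*} [LinearOrder α] {a v : α}
    {s : Finset α} (ha : ∀ x ∈ s, a < x) (hv : v ∈ s) :
    (insert a s).filter (v ≤ ·) = s.filter (v ≤ ·) := by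
  rw [Finset.filter_insert, if_neg (ha v hv).not_ge]

theorem sum_filter_le_insert_of_forall_lt {α M : Type*} [LinearOrder α]
    [AddCommMonoid M] {a : α} {s : Finset α} (e : α → M) (ha : ∀ x ∈ s, a < x) :
    ∑ w ∈ insert a s with a ≤ w, e w = e a + ∑ w ∈ s, e w := by
  rw [Finset.filter_true_of_mem fun w hw => ?_, Finset.sum_insert fun h => (ha a h).false]
  rcases Finset.mem_insert.mp hw with rfl | hw
  exacts [le_rfl, (ha w hw).le]

section SummationByParts

open Finset

variable {R : Type*} [CommRing R] [LinearOrder R] [IsStrictOrderedRing R]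

-- The lower bound `c` makes the statement inductive; when `∑ e = 0` it reads `0 ≤ ∑ e v * v`.
theorem mul_sum_le_sum_mul_of_upper_sums_nonneg (S : Finset R) (e : R → R)
    (he : ∀ v ∈ S, 0 ≤ ∑ w ∈ S with v ≤ w, e w) {c : R} (hc : ∀ v ∈ S, c ≤ v) :
    c * ∑ v ∈ S, e v ≤ ∑ v ∈ S, e v * v := by
  induction S using Finset.induction_on_min generalizing c with
  | empty => simp
  | insert a s ha ih =>
    have has : a ∉ s := fun h => (ha a h).false
    have hG := he a (mem_insert_self a s)
    rw [sum_filter_le_insert_of_forall_lt e ha] at hG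
    have ih' := ih (fun v hv => filter_le_insert_of_forall_lt ha hv ▸ he v (mem_insert_of_mem hv))
      (fun v hv => (ha v hv).le)
    rw [sum_insert has, sum_insert has]
    calc c * (e a + ∑ v ∈ s, e v) ≤ a * (e a + ∑ v ∈ s, e v) :=
          mul_le_mul_of_nonneg_right (hc a (mem_insert_self a s)) hG
      _ ≤ e a * a + ∑ v ∈ s, e v * v := by linarith

theorem mul_sum_lt_sum_mul_of_upper_sums_nonneg (S : Finset R) (e : R → R)
    (he : ∀ v ∈ S, 0 ≤ ∑ w ∈ S with v ≤ w, e w) {c : R} (hc : ∀ v ∈ S, c ≤ v)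
    {v₀ : R} (hv₀ : v₀ ∈ S) (hcv₀ : c < v₀) (hpos : 0 < ∑ w ∈ S with v₀ ≤ w, e w) :
    c * ∑ v ∈ S, e v < ∑ v ∈ S, e v * v := by
  induction S using Finset.induction_on_min generalizing c with
  | empty => simp at hv₀
  | insert a s ha ih =>
    have has : a ∉ s := fun h => (ha a h).false
    have he' : ∀ v ∈ s, 0 ≤ ∑ w ∈ s with v ≤ w, e w := fun v hv =>
      filter_le_insert_of_forall_lt ha hv ▸ he v (mem_insert_of_mem hv)
    have hG := he a (mem_insert_self a s)
    rw [sum_filter_le_insert_of_forall_lt e ha] at hG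
    rw [sum_insert has, sum_insert has]
    rcases mem_insert.mp hv₀ with rfl | hv₀
    · rw [sum_filter_le_insert_of_forall_lt e ha] at hpos
      have := mul_sum_le_sum_mul_of_upper_sums_nonneg s e he' fun v hv => (ha v hv).le
      calc c * (e v₀ + ∑ v ∈ s, e v) < v₀ * (e v₀ + ∑ v ∈ s, e v) :=
            mul_lt_mul_of_pos_right hcv₀ hpos
        _ ≤ e v₀ * v₀ + ∑ v ∈ s, e v * v := by linarith
    · have := ih he' (fun v hv => (ha v hv).le) hv₀ (ha v₀ hv₀)
        (filter_le_insert_of_forall_lt ha hv₀ ▸ hpos)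
      calc c * (e a + ∑ v ∈ s, e v) ≤ a * (e a + ∑ v ∈ s, e v) :=
            mul_le_mul_of_nonneg_right (hc a (mem_insert_self a s)) hG
        _ < e a * a + ∑ v ∈ s, e v * v := by linarith

end SummationByParts

section Fibers

open Finset

theorem sum_mul_eq_sum_image {R : Type*} [CommSemiring R] [DecidableEq R] (d u : A → R) :
    ∑ x, d x * u x = ∑ v ∈ univ.image u, (∑ x with u x = v, d x) * v := by
  rw [← sum_fiberwise_of_maps_to (fun x _ => mem_image_of_mem u (mem_univ x))]
  refine sum_congr rfl fun v _ => ?_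
  rw [sum_mul]
  exact sum_congr rfl fun x hx => by rw [(mem_filter.mp hx).2]

theorem sum_filter_le_image {M β : Type*} [AddCommMonoid M] [LinearOrder β] (d : A → M)
    (u : A → β) (v : β) :
    ∑ w ∈ univ.image u with v ≤ w, ∑ x with u x = w, d x = ∑ x with v ≤ u x, d x := by
  rw [← sum_fiberwise_of_maps_to (s := univ.filter (v ≤ u ·)) (t := (univ.image u).filter (v ≤ ·))
    (fun x hx => mem_filter.mpr ⟨mem_image_of_mem u (mem_univ x), (mem_filter.mp hx).2⟩)]
  refine sum_congr rfl fun w hw => ?_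
  rw [filter_filter]
  refine sum_congr (filter_congr fun x _ => ?_) fun _ _ => rfl
  constructor
  · rintro rfl
    exact ⟨(mem_filter.mp hw).2, rfl⟩
  · exact fun h => h.2

variable {R : Type*} [CommRing R] [LinearOrder R] [IsStrictOrderedRing R]

theorem sum_mul_nonneg_of_upper_sums_nonneg {d u : A → R} (hd : ∑ x, d x = 0)
    (hup : ∀ z, 0 ≤ ∑ x with u z ≤ u x, d x) : 0 ≤ ∑ x, d x * u x := by
  obtain ⟨c, hc⟩ := Finite.bddBelow_range u
  have key := mul_sum_le_sum_mul_of_upper_sums_nonneg (univ.image u)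
    (fun v => ∑ x with u x = v, d x)
    (by simpa only [forall_mem_image, mem_univ, true_imp_iff, sum_filter_le_image] using hup)
    (c := c) (by simpa only [forall_mem_image, mem_univ, true_imp_iff] using fun x => hc ⟨x, rfl⟩)
  rwa [sum_fiberwise_of_maps_to (fun x _ => mem_image_of_mem u (mem_univ x)), hd, mul_zero,
    ← sum_mul_eq_sum_image] at key

theorem sum_mul_pos_of_upper_sums_nonneg {d u : A → R} (hd : ∑ x, d x = 0)
    (hup : ∀ z, 0 ≤ ∑ x with u z ≤ u x, d x) {z₀ : A} (hz₀ : 0 < ∑ x with u z₀ ≤ u x, d x) :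
    0 < ∑ x, d x * u x := by
  obtain ⟨c, hc⟩ := Finite.bddBelow_range u
  have key := mul_sum_lt_sum_mul_of_upper_sums_nonneg (univ.image u)
    (fun v => ∑ x with u x = v, d x)
    (by simpa only [forall_mem_image, mem_univ, true_imp_iff, sum_filter_le_image] using hup)
    (c := c - 1) (by simpa only [forall_mem_image, mem_univ, true_imp_iff] using
      fun x => (sub_one_lt c).le.trans (hc ⟨x, rfl⟩))
    (mem_image_of_mem u (mem_univ z₀)) ((sub_one_lt c).trans_le (hc ⟨z₀, rfl⟩))
    (by rwa [sum_filter_le_image])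
  rwa [sum_fiberwise_of_maps_to (fun x _ => mem_image_of_mem u (mem_univ x)), hd, mul_zero,
    ← sum_mul_eq_sum_image] at key

end Fibers

theorem ConsistentUtil.add_ite {α : Type*} {r : α → α → Prop} {u : α → ℝ}
    (hu : ConsistentUtil r u) (x₀ : α) {t : ℝ} (ht : 0 ≤ t) :
    ConsistentUtil r (fun x => u x + if r x x₀ then t else 0) := by
  intro x y
  simp only [← hu x y, ← hu x x₀, ← hu y x₀, ge_iff_le]
  split_ifs <;> constructor <;> intro <;> linarith

section Lotteries

open Finset

def rankUtil (r : A → A → Prop) (x : A) : ℝ :=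
  #{y | r x y}

theorem IsPref.consistentUtil_rankUtil {r : A → A → Prop} (hr : IsPref r) :
    ConsistentUtil r (rankUtil r) := by
  intro x y
  simp only [rankUtil, ge_iff_le, Nat.cast_le]
  constructor
  · intro hcard
    by_contra hxy
    have hsub : univ.filter (r x ·) ⊂ univ.filter (r y ·) := by
      refine ssubset_iff_of_subset (fun z hz => ?_) |>.mpr ⟨y, ?_, ?_⟩
      · simp only [mem_filter, mem_univ, true_and] at hz ⊢
        exact hr.2 y x z ((hr.1 x y).resolve_left hxy) hz
      · simpa using (hr.1 y y).elim id id
      · simpa using hxy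
    exact (card_lt_card hsub).not_ge hcard
  · intro hxy
    refine card_le_card fun z hz => ?_
    simp only [mem_filter, mem_univ, true_and] at hz ⊢
    exact hr.2 x y z hxy hz

theorem Lottery.sum_sub_eq_zero (p q : Lottery A) : ∑ x, (q.1 x - p.1 x) = 0 := by
  rw [sum_sub_distrib, q.2.2, p.2.2, sub_self]

theorem expUtil_sub_expUtil (u : A → ℝ) (p q : Lottery A) :
    expUtil u q - expUtil u p = ∑ x, (q.1 x - p.1 x) * u x := by
  simp only [expUtil, ← sum_sub_distrib, sub_mul]

theorem expUtil_add_ite (u : A → ℝ) (r : A → A → Prop) (x₀ : A) (t : ℝ) (p : Lottery A) :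
    expUtil (fun x => u x + if r x x₀ then t else 0) p = expUtil u p + t * upperSum r p x₀ := by
  simp only [expUtil, upperSum, mul_add, sum_add_distrib, mul_ite, mul_zero, sum_mul, ite_mul,
    zero_mul, mul_comm t]

variable {r : A → A → Prop} {u : A → ℝ}

theorem ConsistentUtil.upperSum_sub_upperSum (hu : ConsistentUtil r u) (p q : Lottery A)
    (z : A) : upperSum r q z - upperSum r p z = ∑ x with u z ≤ u x, (q.1 x - p.1 x) := by
  simp only [upperSum, ← sum_sub_distrib, sum_filter, ← hu _ z, ge_iff_le]
  exact sum_congr rfl fun x _ => by split_ifs <;> simp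

theorem ConsistentUtil.expUtil_le_of_sdGe (hu : ConsistentUtil r u) {p q : Lottery A}
    (h : SDGe r q p) : expUtil u p ≤ expUtil u q := by
  have := sum_mul_nonneg_of_upper_sums_nonneg (p.sum_sub_eq_zero q)
    fun z => hu.upperSum_sub_upperSum p q z ▸ sub_nonneg.mpr (h z)
  linarith [expUtil_sub_expUtil u p q]

theorem ConsistentUtil.expUtil_lt_of_sdGt (hu : ConsistentUtil r u) {p q : Lottery A}
    (h : SDGt r q p) : expUtil u p < expUtil u q := by
  obtain ⟨z₀, hz₀⟩ : ∃ z, upperSum r p z < upperSum r q z := by simpa [SDGe] using h.2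
  have := sum_mul_pos_of_upper_sums_nonneg (p.sum_sub_eq_zero q)
    (fun z => hu.upperSum_sub_upperSum p q z ▸ sub_nonneg.mpr (h.1 z))
    (hu.upperSum_sub_upperSum p q z₀ ▸ sub_pos.mpr hz₀)
  linarith [expUtil_sub_expUtil u p q]

theorem IsPref.exists_consistentUtil_expUtil_lt (hr : IsPref r) {p q : Lottery A}
    (h : ¬ SDGe r q p) : ∃ u, ConsistentUtil r u ∧ expUtil u q < expUtil u p := by
  obtain ⟨x₀, hx₀⟩ : ∃ x, upperSum r q x < upperSum r p x := by simpa [SDGe] using h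
  set c := upperSum r p x₀ - upperSum r q x₀
  set D := expUtil (rankUtil r) q - expUtil (rankUtil r) p
  have hc : 0 < c := sub_pos.mpr hx₀
  have ht : 0 ≤ (|D| + 1) / c := by positivity
  refine ⟨_, hr.consistentUtil_rankUtil.add_ite x₀ ht, ?_⟩
  have hD : D < (|D| + 1) / c * c := by
    rw [div_mul_cancel₀ _ hc.ne']
    linarith [le_abs_self D]
  rw [expUtil_add_ite, expUtil_add_ite]
  linarith

end Lotteries

theorem ValidProfile.exists_utilRep {n : ℕ} {R : Fin n → A → A → Prop} (hR : ValidProfile R) :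
    ∃ u, UtilRep R u :=
  ⟨fun i => rankUtil (R i), fun i => (hR i).consistentUtil_rankUtil⟩

theorem sdDominates_iff_forall_uDom {n : ℕ} {R : Fin n → A → A → Prop} (hR : ValidProfile R)
    (p q : Lottery A) :
    ((∀ i, SDGe (R i) q p) ∧ ∃ i, SDGt (R i) q p) ↔ ∀ u, UtilRep R u → UDom u q p := by
  constructor
  · rintro ⟨hge, i, hgt⟩ u hu
    exact ⟨fun j => (hu j).expUtil_le_of_sdGe (hge j), i, (hu i).expUtil_lt_of_sdGt hgt⟩
  · intro hdom
    obtain ⟨u₀, hu₀⟩ := hR.exists_utilRep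
    have hge : ∀ i, SDGe (R i) q p := by
      intro i
      by_contra hqp
      obtain ⟨v, hv, hlt⟩ := (hR i).exists_consistentUtil_expUtil_lt hqp
      have hrep : UtilRep R (Function.update u₀ i v) := by
        intro j
        rcases eq_or_ne j i with rfl | hj
        · simpa using hv
        · simpa [hj] using hu₀ j
      have := (hdom _ hrep).1 i
      simp only [Function.update_self] at this
      linarith
    obtain ⟨i, hi⟩ := (hdom u₀ hu₀).2
    exact ⟨hge, i, hge i, fun hpq => ((hu₀ i).expUtil_le_of_sdGe hpq).not_gt hi⟩

theorem sdEfficientAt_iff_not_exists_forall_uDom {n : ℕ} {R : Fin n → A → A → Prop}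
    (hR : ValidProfile R) (p : Lottery A) :
    SDEfficientAt R p ↔ ¬ ∃ q : Lottery A, ∀ u, UtilRep R u → UDom u q p :=
  not_congr (exists_congr fun q => sdDominates_iff_forall_uDom hR p q)

theorem sd_efficient_iff_no_uDominating {A : Type*} [Fintype A] {n : ℕ}
    (R : Fin n → A → A → Prop) (hR : ValidProfile R) (p : Lottery A)
    (f : (Fin n → A → A → Prop) → Lottery A) :
    (SDEfficientAt R p ↔
      ¬ ∃ q : Lottery A, ∀ u : Fin n → A → ℝ, UtilRep R u → UDom u q p) ∧
    ((∀ R' : Fin n → A → A → Prop, ValidProfile R' →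
        ¬ ∃ q : Lottery A, ∀ u : Fin n → A → ℝ, UtilRep R' u → UDom u q (f R')) ↔
      ∀ R' : Fin n → A → A → Prop, ValidProfile R' →
        ¬ ∃ q : Lottery A, (∀ i, SDGe (R' i) q (f R')) ∧ ∃ i, SDGt (R' i) q (f R')) :=
  ⟨sdEfficientAt_iff_not_exists_forall_uDom hR p, forall₂_congr fun _ hR' =>
    (sdEfficientAt_iff_not_exists_forall_uDom hR' (f _)).symm⟩
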